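/- arXiv:2309.08483 — 3 statements merged into one kernel-verified Lean document; each statement's English description precedes it below -/
import Mathlib

section
/- Let G be a metabelian group, let v ∈ G be an element not lying in the commutator subgroup G', and let d ∈ G'. Then for every integer k there exists c ∈ G' such that (v·d)^k = v^k · d^k · ⁅c, v⁆. -/
/-- The commutator ⁅a,b⁆ = a⁻¹b⁻¹ab (paper convention). -/
def pcomm {G : Type*} [Group G] (a b : G) : G := a⁻¹ * b⁻¹ * a * b

section Aux

variable {G : Type*} [Group G]

lemma pcomm_mem (c v : G) : pcomm c v ∈ commutator G := by
  open scoped commutatorElement in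
  have h : pcomm c v = ⁅c⁻¹, v⁻¹⁆ := by
    unfold pcomm; rw [commutatorElement_def]; group
  rw [h, commutator_def]
  exact Subgroup.commutator_mem_commutator (Subgroup.mem_top _) (Subgroup.mem_top _)

lemma pcomm_conj (c v : G) : v⁻¹ * pcomm c v * v = pcomm (v⁻¹ * c * v) v := by
  unfold pcomm; group

lemma pcomm_conj' (c v : G) : v * pcomm c v * v⁻¹ = pcomm (v * c * v⁻¹) v := by
  unfold pcomm; group

lemma conj_eq_mul_pcomm (x v : G) : v⁻¹ * x * v = x * pcomm x v := by
  unfold pcomm; group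

lemma pcomm_mul
    (hG : ∀ a b : G, a ∈ commutator G → b ∈ commutator G → a * b = b * a)
    (a b v : G) (ha : a ∈ commutator G) (hb : b ∈ commutator G) :
    pcomm (a * b) v = pcomm a v * pcomm b v := by
  calc pcomm (a * b) v = b⁻¹ * pcomm a v * (v⁻¹ * b * v) := by unfold pcomm; group
    _ = pcomm a v * b⁻¹ * (v⁻¹ * b * v) := by
        rw [hG b⁻¹ (pcomm a v) (inv_mem hb) (pcomm_mem a v)]
    _ = pcomm a v * pcomm b v := by unfold pcomm; group

end Aux

theorem stmt2 {G : Type*} [Group G]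
    (hG : ∀ a b : G, a ∈ commutator G → b ∈ commutator G → a * b = b * a)
    (v : G) (hv : v ∉ commutator G) (d : G) (hd : d ∈ commutator G) :
    ∀ k : ℤ, ∃ c ∈ commutator G, (v * d) ^ k = v ^ k * d ^ k * pcomm c v := by
  have hN : (commutator G).Normal := Subgroup.commutator_normal ⊤ ⊤
  intro k
  induction k using Int.induction_on with
  | zero => exact ⟨1, one_mem _, by unfold pcomm; group⟩
  | succ k ih =>
    obtain ⟨c, hc, ih⟩ := ih
    have hdk : (d : G) ^ (k : ℤ) ∈ commutator G := zpow_mem hd _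
    have hcv : v⁻¹ * c * v ∈ commutator G := by
      simpa using hN.conj_mem c hc v⁻¹
    refine ⟨d ^ (k : ℤ) * (v⁻¹ * c * v), mul_mem hdk hcv, ?_⟩
    have h1 : (v * d) ^ ((k : ℤ) + 1) = v ^ (k : ℤ) * d ^ (k : ℤ) * pcomm c v * (v * d) := by
      rw [zpow_add_one, ih]
    rw [h1, pcomm_mul hG _ _ v hdk hcv]
    have h2 : v ^ (k : ℤ) * d ^ (k : ℤ) * pcomm c v * (v * d)
        = v ^ ((k : ℤ) + 1) * ((v⁻¹ * d ^ (k : ℤ) * v) * (v⁻¹ * pcomm c v * v) * d) := by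
      rw [zpow_add_one]; group
    rw [h2, pcomm_conj, conj_eq_mul_pcomm]
    have h3 : pcomm (v⁻¹ * c * v) v * d = d * pcomm (v⁻¹ * c * v) v :=
      hG _ _ (pcomm_mem _ _) hd
    have h4 : pcomm (d ^ (k : ℤ)) v * d = d * pcomm (d ^ (k : ℤ)) v :=
      hG _ _ (pcomm_mem _ _) hd
    calc v ^ ((k : ℤ) + 1) * (d ^ (k : ℤ) * pcomm (d ^ (k : ℤ)) v * pcomm (v⁻¹ * c * v) v * d)
        = v ^ ((k : ℤ) + 1) * (d ^ (k : ℤ) * pcomm (d ^ (k : ℤ)) v * (pcomm (v⁻¹ * c * v) v * d)) := by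
          group
      _ = v ^ ((k : ℤ) + 1) * (d ^ (k : ℤ) * (pcomm (d ^ (k : ℤ)) v * d) * pcomm (v⁻¹ * c * v) v) := by
          rw [h3]; group
      _ = v ^ ((k : ℤ) + 1) * (d ^ (k : ℤ) * d * pcomm (d ^ (k : ℤ)) v * pcomm (v⁻¹ * c * v) v) := by
          rw [h4]; group
      _ = v ^ ((k : ℤ) + 1) * d ^ ((k : ℤ) + 1) * (pcomm (d ^ (k : ℤ)) v * pcomm (v⁻¹ * c * v) v) := by
          rw [zpow_add_one]; group
  | pred k ih =>
    obtain ⟨c, hc, ih⟩ := ih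
    set m : ℤ := -(k : ℤ) with hm
    have hdm : (d : G) ^ (-(m - 1)) ∈ commutator G := zpow_mem hd _
    have hc1 : v * d ^ (-(m - 1)) * v⁻¹ ∈ commutator G := by
      simpa using hN.conj_mem _ hdm v
    have hc2 : v * c * v⁻¹ ∈ commutator G := by
      simpa using hN.conj_mem c hc v
    refine ⟨(v * d ^ (-(m - 1)) * v⁻¹) * (v * c * v⁻¹), mul_mem hc1 hc2, ?_⟩
    have h1 : (v * d) ^ (m - 1) = v ^ m * d ^ m * pcomm c v * (d⁻¹ * v⁻¹) := by
      rw [zpow_sub_one, ih]; group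
    rw [h1, pcomm_mul hG _ _ v hc1 hc2]
    have h3 : pcomm c v * d⁻¹ = d⁻¹ * pcomm c v := hG _ _ (pcomm_mem _ _) (inv_mem hd)
    have h2 : v ^ m * d ^ m * pcomm c v * (d⁻¹ * v⁻¹)
        = v ^ m * d ^ m * (pcomm c v * d⁻¹) * v⁻¹ := by group
    rw [h2, h3]
    have h4 : v ^ m * d ^ m * (d⁻¹ * pcomm c v) * v⁻¹
        = v ^ (m - 1) * ((v * d ^ (m - 1) * v⁻¹) * (v * pcomm c v * v⁻¹)) := by
      rw [zpow_sub_one]; group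
    rw [h4, pcomm_conj']
    -- v * d^(m-1) * v⁻¹ = d^(m-1) * pcomm (v * d^(-(m-1)) * v⁻¹) v
    have he : d ^ (-(m - 1)) = (d ^ (m - 1))⁻¹ := zpow_neg d (m - 1)
    rw [he]
    set e : G := d ^ (m - 1) with hee
    have h5 : v * e * v⁻¹ = e * pcomm (v * e⁻¹ * v⁻¹) v := by
      have key : (v * e * v⁻¹) * e⁻¹ = e⁻¹ * (v * e * v⁻¹) := by
        refine hG _ _ ?_ (inv_mem (zpow_mem hd _))
        simpa using hN.conj_mem _ (zpow_mem hd (m - 1)) v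
      have hp : pcomm (v * e⁻¹ * v⁻¹) v = (v * e * v⁻¹) * e⁻¹ := by
        unfold pcomm; group
      rw [hp, key]; group
    rw [h5]
    group
end

section
/- Let G be a metabelian group and z, g ∈ G. Then for all natural numbers m and n one has ⁅z^m, g^n⁆ = ∏_{i=0}^{m-1} ∏_{j=0}^{n-1} (z^{i} g^{j})⁻¹ · ⁅z, g⁆ · (z^{i} g^{j}) (the factors lie in the abelian subgroup G', so the order of the product is irrelevant). -/
section

variable {G : Type*} [Group G]

open scoped commutatorElement in
lemma pcomm_mem_commutator (a b : G) : pcomm a b ∈ commutator G := by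
  rw [show pcomm a b = ⁅a⁻¹, b⁻¹⁆ by simp [pcomm, commutatorElement_def]]
  exact Subgroup.commutator_mem_commutator (Subgroup.mem_top _) (Subgroup.mem_top _)

lemma inv_mul_mul_mem_commutator {x : G} (hx : x ∈ commutator G) (c : G) :
    c⁻¹ * x * c ∈ commutator G := by
  simpa [commutator_def] using (Subgroup.commutator_normal ⊤ ⊤).conj_mem x hx c⁻¹

lemma list_prod_map_inv_mul_mul (c : G) (l : List G) :
    (l.map fun x => c⁻¹ * x * c).prod = c⁻¹ * l.prod * c := by
  induction l with
  | nil => simp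
  | cons x l ih => simp only [List.map_cons, List.prod_cons, ih]; group

lemma pcomm_mul_right (a b c : G) : pcomm a (b * c) = pcomm a c * (c⁻¹ * pcomm a b * c) := by
  simp only [pcomm]; group

lemma pcomm_mul_left (a b c : G) : pcomm (a * b) c = b⁻¹ * pcomm a c * b * pcomm b c := by
  simp only [pcomm]; group

lemma pcomm_pow_right (a b : G) (n : ℕ) :
    pcomm a (b ^ n) = ((List.range n).map fun j => (b ^ j)⁻¹ * pcomm a b * b ^ j).prod := by
  induction n with
  | zero => simp [pcomm]
  | succ n ih => simp [List.range_succ, pow_succ', pcomm_mul_right, ih, mul_assoc]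

variable (hG : ∀ a b : G, a ∈ commutator G → b ∈ commutator G → a * b = b * a)
include hG

lemma inv_mul_mul_comm_of_mem_commutator {x : G} (hx : x ∈ commutator G) (a b : G) :
    (a * b)⁻¹ * x * (a * b) = (b * a)⁻¹ * x * (b * a) := by
  have hab : a * b = b * a * pcomm a b := by simp only [pcomm]; group
  have hcomm := hG _ _ (pcomm_mem_commutator a b) (inv_mul_mul_mem_commutator hx (b * a))
  calc (a * b)⁻¹ * x * (a * b)
      = (pcomm a b)⁻¹ * ((b * a)⁻¹ * x * (b * a) * pcomm a b) := by rw [hab]; group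
    _ = (b * a)⁻¹ * x * (b * a) := by rw [← hcomm]; group

lemma pcomm_pow_left (a b : G) (m : ℕ) :
    pcomm (a ^ m) b = ((List.range m).map fun i => (a ^ i)⁻¹ * pcomm a b * a ^ i).prod := by
  induction m with
  | zero => simp [pcomm]
  | succ m ih =>
    rw [pow_succ', pcomm_mul_left, List.range_succ, List.map_append, List.prod_append, ← ih,
      hG _ _ (inv_mul_mul_mem_commutator (pcomm_mem_commutator a b) _) (pcomm_mem_commutator _ _)]
    simp

end

theorem stmt6 {G : Type*} [Group G]
    (hG : ∀ a b : G, a ∈ commutator G → b ∈ commutator G → a * b = b * a)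
    (z g : G) (m n : ℕ) :
    pcomm (z ^ m) (g ^ n) =
      ((List.range m).map fun i =>
        ((List.range n).map fun j =>
          (z ^ i * g ^ j)⁻¹ * pcomm z g * (z ^ i * g ^ j)).prod).prod := by
  rw [pcomm_pow_left hG]
  refine congrArg List.prod (List.map_congr_left fun i _ => ?_)
  rw [pcomm_pow_right, ← list_prod_map_inv_mul_mul, List.map_map]
  refine congrArg List.prod (List.map_congr_left fun j _ => ?_)
  rw [inv_mul_mul_comm_of_mem_commutator hG (pcomm_mem_commutator z g)]
  simp [mul_assoc]
end

section
/- Let G be the free metabelian group of rank n ≥ 2 and let g ∈ G' with g ≠ 1. Then the centralizer of g in G is exactly the commutator subgroup G'. -/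
instance (n : ℕ) : (derivedSeries (FreeGroup (Fin n)) 2).Normal :=
  derivedSeries_normal _ _

/-- The free metabelian group of rank n: the quotient of the free group on n
generators by its second derived subgroup. -/
def freeMetabelian (n : ℕ) :=
  FreeGroup (Fin n) ⧸ derivedSeries (FreeGroup (Fin n)) 2

instance (n : ℕ) : Group (freeMetabelian n) :=
  inferInstanceAs (Group (FreeGroup (Fin n) ⧸ derivedSeries (FreeGroup (Fin n)) 2))

/-- The images of the standard generators of the free group in the free
metabelian group. -/
def xgen (n : ℕ) (i : Fin n) : freeMetabelian n :=
  QuotientGroup.mk (FreeGroup.of i)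

namespace SemidirectProduct

variable {N G : Type*} [CommGroup N] [Group G] {φ : G →* MulAut N}

theorem commute_of_right_eq_one {p q : N ⋊[φ] G} (hp : p.right = 1) (hq : q.right = 1) :
    Commute p q := by
  ext <;> simp [hp, hq, mul_comm]

theorem apply_left_eq_of_commute {p q : N ⋊[φ] G} (hq : q.right = 1) (h : Commute p q) :
    φ p.right q.left = q.left := by
  have := congrArg left h.eq
  simp only [mul_left, hq, map_one, MulAut.one_apply] at this
  rw [mul_comm q.left] at this
  exact mul_left_cancel this

end SemidirectProduct

theorem derivedSeries_quotient_derivedSeries (G : Type*) [Group G] (n : ℕ) :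
    derivedSeries (G ⧸ derivedSeries G n) n = ⊥ := by
  rw [← map_derivedSeries_eq (QuotientGroup.mk'_surjective (derivedSeries G n)),
    Subgroup.map_eq_bot_iff, QuotientGroup.ker_mk']

theorem commute_of_mem_commutator_of_derivedSeries_two_eq_bot {G : Type*} [Group G]
    (hG : derivedSeries G 2 = ⊥) {a b : G} (ha : a ∈ commutator G) (hb : b ∈ commutator G) :
    Commute a b := by
  rw [← commutatorElement_eq_one_iff_commute, ← Subgroup.mem_bot, ← hG, derivedSeries_succ,
    derivedSeries_one]
  exact Subgroup.commutator_mem_commutator ha hb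

open scoped MonoidAlgebra commutatorElement

noncomputable section

variable {α G H : Type*} [Group G] [Group H]

theorem MonoidAlgebra.mapDomainRingHom_of (f : G →* H) (g : G) :
    mapDomainRingHom ℤ f (of ℤ G g) = of ℤ H (f g) := by
  simp [of_apply, mapDomain_single]

section RelationModule

variable (π : FreeGroup α →* H)

theorem mul_inv_invFun_mem_ker (g : FreeGroup α) :
    g * (Function.invFun π (π g))⁻¹ ∈ π.ker := by
  rw [MonoidHom.mem_ker, map_mul, map_inv, Function.invFun_eq (f := π) ⟨g, rfl⟩, mul_inv_cancel]

def relClass (g : FreeGroup α) : Additive (Abelianization π.ker) :=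
  .ofMul (Abelianization.of ⟨_, mul_inv_invFun_mem_ker π g⟩)

theorem relClass_mul_of_mem {u : FreeGroup α} (hu : u ∈ π.ker) (g : FreeGroup α) :
    relClass π (u * g) = .ofMul (Abelianization.of ⟨u, hu⟩) + relClass π g := by
  have hπ : π (u * g) = π g := by rw [map_mul, π.mem_ker.mp hu, one_mul]
  rw [relClass, relClass, ← ofMul_mul, ← map_mul]
  congr 3
  simp only [hπ, mul_assoc]

def relMap : ℤ[FreeGroup α] →ₗ[ℤ] Additive (Abelianization π.ker) :=
  (MonoidAlgebra.basis _ ℤ).constr ℤ (relClass π)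

theorem relMap_of (g : FreeGroup α) : relMap π (MonoidAlgebra.of ℤ _ g) = relClass π g :=
  (MonoidAlgebra.basis _ ℤ).constr_basis ℤ _ g

theorem relMap_mul_of_sub_one (f : FreeGroup α) (x : ℤ[FreeGroup α]) :
    relMap π (x * (MonoidAlgebra.of ℤ _ f - 1)) =
      (MonoidAlgebra.basis H ℤ).constr ℤ (fun h ↦ relClass π (Function.invFun π h * f))
        (MonoidAlgebra.mapDomainRingHom ℤ π x) := by
  induction x using MonoidAlgebra.induction_on with
  | of g =>
    have hg : relClass π (g * f) = relClass π g + relClass π (Function.invFun π (π g) * f) := by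
      have h := relClass_mul_of_mem π (mul_inv_invFun_mem_ker π g) (Function.invFun π (π g) * f)
      rwa [mul_assoc, inv_mul_cancel_left] at h
    rw [mul_sub, mul_one, ← map_mul, map_sub, relMap_of, relMap_of, hg, add_sub_cancel_left,
      MonoidAlgebra.mapDomainRingHom_of]
    exact ((MonoidAlgebra.basis H ℤ).constr_basis ℤ
      (fun h ↦ relClass π (Function.invFun π h * f)) (π g)).symm
  | add x y hx hy => rw [add_mul, map_add, map_add, map_add, hx, hy]
  | smul c x hx => rw [smul_mul_assoc, map_zsmul, map_zsmul, map_zsmul, hx]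

end RelationModule

variable (α H) in
def MagnusGroup.action : H →* MulAut (Multiplicative (α → ℤ[H])) :=
  (MulAutMultiplicative _).symm.toMonoidHom.comp
    ((DistribMulAction.toAddAut ℤ[H]ˣ (α → ℤ[H])).comp (MonoidAlgebra.of ℤ H).toHomUnits)

variable (α H) in
abbrev MagnusGroup := Multiplicative (α → ℤ[H]) ⋊[MagnusGroup.action α H] H

namespace MagnusGroup

theorem toAdd_action_apply (h : H) (v : Multiplicative (α → ℤ[H])) (i : α) :
    (action α H h v).toAdd i = MonoidAlgebra.of ℤ H h * v.toAdd i := rfl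

def map (f : G →* H) : MagnusGroup α G →* MagnusGroup α H :=
  SemidirectProduct.map
    (AddMonoidHom.toMultiplicative
      ((MonoidAlgebra.mapDomainRingHom ℤ f).toAddMonoidHom.compLeft α)) f
    fun g ↦ by
      refine MonoidHom.ext fun v ↦ funext fun i ↦ ?_
      change MonoidAlgebra.mapDomainRingHom ℤ f (MonoidAlgebra.of ℤ G g * v.toAdd i) =
        MonoidAlgebra.of ℤ H (f g) * MonoidAlgebra.mapDomainRingHom ℤ f (v.toAdd i)
      rw [map_mul, MonoidAlgebra.mapDomainRingHom_of]

theorem right_eq_one_of_commute [NoZeroDivisors ℤ[H]] {p q : MagnusGroup α H}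
    (hq : q.right = 1) (hq1 : q ≠ 1) (h : Commute p q) : p.right = 1 := by
  obtain ⟨i, hi⟩ : ∃ i, q.left.toAdd i ≠ 0 := by
    by_contra! h0
    exact hq1 (SemidirectProduct.ext (funext h0) hq)
  have hfix : MonoidAlgebra.of ℤ H p.right * q.left.toAdd i = q.left.toAdd i :=
    congrArg (·.toAdd i) (SemidirectProduct.apply_left_eq_of_commute hq h)
  have hof : MonoidAlgebra.of ℤ H p.right = 1 := by
    have : (MonoidAlgebra.of ℤ H p.right - 1) * q.left.toAdd i = 0 := by
      rw [sub_mul, one_mul, hfix, sub_self]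
    exact sub_eq_zero.mp ((mul_eq_zero.mp this).resolve_right hi)
  exact MonoidAlgebra.of_injective (hof.trans (map_one _).symm)

end MagnusGroup

variable [DecidableEq α]

def magnusHom (π : FreeGroup α →* H) : FreeGroup α →* MagnusGroup α H :=
  FreeGroup.lift fun i ↦ ⟨.ofAdd (Pi.single i 1), π (.of i)⟩

theorem magnusHom_of (π : FreeGroup α →* H) (i : α) :
    magnusHom π (.of i) = ⟨.ofAdd (Pi.single i 1), π (.of i)⟩ :=
  FreeGroup.lift_apply_of

theorem magnusHom_right (π : FreeGroup α →* H) (w : FreeGroup α) :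
    (magnusHom π w).right = π w :=
  DFunLike.congr_fun (show SemidirectProduct.rightHom.comp (magnusHom π) = π from
    FreeGroup.ext_hom _ _ fun i ↦ by simp [magnusHom_of]) w

theorem MagnusGroup.map_comp_magnusHom (f : G →* H) (π : FreeGroup α →* G) :
    (MagnusGroup.map f).comp (magnusHom π) = magnusHom (f.comp π) :=
  FreeGroup.ext_hom _ _ fun i ↦ by
    rw [MonoidHom.comp_apply, magnusHom_of, magnusHom_of]
    refine SemidirectProduct.ext (funext fun j ↦ ?_) rfl
    change MonoidAlgebra.mapDomainRingHom ℤ f (Pi.single (M := fun _ ↦ ℤ[G]) i 1 j) =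
      Pi.single (M := fun _ ↦ ℤ[H]) i 1 j
    rw [Pi.apply_single (fun _ ↦ MonoidAlgebra.mapDomainRingHom ℤ f) (fun _ ↦ map_zero _), map_one]

-- The Fox derivative `∂w/∂xᵢ`, read off the Magnus embedding of `F` over `ℤ[F]` itself.
def foxDeriv (w : FreeGroup α) (i : α) : ℤ[FreeGroup α] :=
  (magnusHom (.id _) w).left.toAdd i

theorem toAdd_magnusHom_left (π : FreeGroup α →* H) (w : FreeGroup α) (i : α) :
    (magnusHom π w).left.toAdd i = MonoidAlgebra.mapDomainRingHom ℤ π (foxDeriv w i) := by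
  rw [← π.comp_id, ← MagnusGroup.map_comp_magnusHom]
  rfl

theorem foxDeriv_of (i : α) : foxDeriv (.of i) = Pi.single i 1 := by
  unfold foxDeriv
  rw [magnusHom_of]
  rfl

theorem foxDeriv_one : foxDeriv (1 : FreeGroup α) = 0 := by
  unfold foxDeriv
  rw [map_one]
  rfl

theorem foxDeriv_mul (u v : FreeGroup α) (i : α) :
    foxDeriv (u * v) i = foxDeriv u i + MonoidAlgebra.of ℤ _ u * foxDeriv v i := by
  simp only [foxDeriv, map_mul, SemidirectProduct.mul_left, magnusHom_right]
  rfl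

theorem sum_foxDeriv_mul_of_sub_one [Fintype α] (w : FreeGroup α) :
    ∑ i, foxDeriv w i * (MonoidAlgebra.of ℤ _ (.of i) - 1) = MonoidAlgebra.of ℤ _ w - 1 := by
  set S : FreeGroup α → ℤ[FreeGroup α] :=
    fun w ↦ ∑ i, foxDeriv w i * (MonoidAlgebra.of ℤ _ (.of i) - 1) with hS
  have S_mul (u v) : S (u * v) = S u + MonoidAlgebra.of ℤ _ u * S v := by
    simp only [hS, foxDeriv_mul, add_mul, Finset.sum_add_distrib, Finset.mul_sum, mul_assoc]
  have of_mul (u v : FreeGroup α) : MonoidAlgebra.of ℤ _ (u * v) - 1 =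
      (MonoidAlgebra.of ℤ _ u - 1) + MonoidAlgebra.of ℤ _ u * (MonoidAlgebra.of ℤ _ v - 1) := by
    rw [map_mul]; noncomm_ring
  have S_one : S 1 = 0 := by simp [hS, foxDeriv_one]
  change S w = _
  induction w using FreeGroup.induction_on with
  | C1 => rw [S_one, map_one, sub_self]
  | of i => simp [hS, foxDeriv_of, Pi.single_apply]
  | mul u v hu hv => rw [S_mul, hu, hv, of_mul]
  | inv_of i hi =>
    have h := S_mul (FreeGroup.of i)⁻¹ (.of i)
    rw [inv_mul_cancel, S_one, hi, mul_sub, ← map_mul, inv_mul_cancel, map_one, mul_one] at h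
    rw [← sub_eq_zero, h]
    abel

theorem mem_commutator_of_magnusHom_eq_one [Fintype α] (π : FreeGroup α →* H) {w : FreeGroup α}
    (hw : magnusHom π w = 1) : w ∈ ⁅π.ker, π.ker⁆ := by
  have hwR : w ∈ π.ker := by rw [MonoidHom.mem_ker, ← magnusHom_right, hw]; rfl
  have hD (i : α) : MonoidAlgebra.mapDomainRingHom ℤ π (foxDeriv w i) = 0 := by
    rw [← toAdd_magnusHom_left, hw]; rfl
  have hclass : relMap π (MonoidAlgebra.of ℤ _ w - 1) = .ofMul (Abelianization.of ⟨w, hwR⟩) := by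
    have h := relClass_mul_of_mem π hwR 1
    rw [mul_one] at h
    rw [map_sub, relMap_of, ← map_one (MonoidAlgebra.of ℤ (FreeGroup α)), relMap_of, h,
      add_sub_cancel_right]
  have hzero : relMap π (MonoidAlgebra.of ℤ _ w - 1) = 0 := by
    rw [← sum_foxDeriv_mul_of_sub_one, map_sum]
    exact Finset.sum_eq_zero fun i _ ↦ by rw [relMap_mul_of_sub_one, hD, map_zero]
  rw [← Subgroup.map_subtype_commutator, ← Abelianization.ker_of]
  exact ⟨⟨w, hwR⟩, Additive.ofMul.injective (hclass.symm.trans hzero), rfl⟩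

theorem ker_magnusHom [Fintype α] (π : FreeGroup α →* H) :
    (magnusHom π).ker = ⁅π.ker, π.ker⁆ := by
  refine le_antisymm (fun w hw ↦ mem_commutator_of_magnusHom_eq_one π hw) ?_
  rw [Subgroup.commutator_le]
  intro u hu v hv
  rw [MonoidHom.mem_ker, map_commutatorElement, commutatorElement_eq_one_iff_commute]
  exact SemidirectProduct.commute_of_right_eq_one (by rwa [magnusHom_right])
    (by rwa [magnusHom_right])

-- Makes `ℤ[F/F']` a domain, through `MonoidAlgebra`'s `NoZeroDivisors` instance.
instance (α : Type*) : UniqueProds (Abelianization (FreeGroup α)) :=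
  (AddEquiv.toMultiplicativeRight (FreeAbelianGroup.equivFinsupp α)).uniqueProds_iff.mpr
    inferInstance

theorem FreeGroup.mem_commutator_of_commutatorElement_mem [Fintype α] {ω ξ : FreeGroup α}
    (hω : ω ∈ commutator (FreeGroup α)) (hω' : ω ∉ derivedSeries (FreeGroup α) 2)
    (h : ⁅ω, ξ⁆ ∈ derivedSeries (FreeGroup α) 2) : ξ ∈ commutator (FreeGroup α) := by
  set ψ := magnusHom (Abelianization.of : FreeGroup α →* _)
  have hker : ψ.ker = derivedSeries (FreeGroup α) 2 := by
    rw [ker_magnusHom, Abelianization.ker_of, derivedSeries_succ, derivedSeries_one]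
  rw [← hker, MonoidHom.mem_ker] at hω' h
  rw [map_commutatorElement, commutatorElement_eq_one_iff_commute] at h
  rw [← Abelianization.ker_of, MonoidHom.mem_ker, ← magnusHom_right] at hω ⊢
  exact MagnusGroup.right_eq_one_of_commute hω hω' h.symm

end

theorem stmt9_general (n : ℕ) (g : freeMetabelian n)
    (hg : g ∈ commutator (freeMetabelian n)) (hg1 : g ≠ 1) :
    Subgroup.centralizer {g} = commutator (freeMetabelian n) := by
  let mk := QuotientGroup.mk' (derivedSeries (FreeGroup (Fin n)) 2)
  have hG' : commutator (freeMetabelian n) = (commutator (FreeGroup (Fin n))).map mk := by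
    rw [← derivedSeries_one, ← derivedSeries_one,
      map_derivedSeries_eq (QuotientGroup.mk'_surjective _)]
    rfl
  refine le_antisymm (fun x hx ↦ ?_) fun x hx ↦ ?_
  · obtain ⟨ξ, rfl⟩ := QuotientGroup.mk'_surjective _ x
    rw [hG'] at hg ⊢
    obtain ⟨ω, hω, rfl⟩ := hg
    refine ⟨ξ, FreeGroup.mem_commutator_of_commutatorElement_mem hω
      (fun h ↦ hg1 ((QuotientGroup.eq_one_iff _).mpr h)) ?_, rfl⟩
    rw [← QuotientGroup.ker_mk' (derivedSeries (FreeGroup (Fin n)) 2), MonoidHom.mem_ker,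
      map_commutatorElement, commutatorElement_eq_one_iff_commute]
    exact (Subgroup.mem_centralizer_singleton_iff.mp hx).symm
  · exact Subgroup.mem_centralizer_singleton_iff.mpr
      (commute_of_mem_commutator_of_derivedSeries_two_eq_bot
        (derivedSeries_quotient_derivedSeries _ 2) hx hg).eq

theorem stmt9 (n : ℕ) (hn : 2 ≤ n) (g : freeMetabelian n)
    (hg : g ∈ commutator (freeMetabelian n)) (hg1 : g ≠ 1) :
    Subgroup.centralizer {g} = commutator (freeMetabelian n) :=
  stmt9_general n g hg hg1
end
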